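/- (Burgunder splitting of a left-nested Lie monomial.) Let K be a commutative ring which is a ℚ-algebra, n ≥ 2, and work in A := FreeAlgebra K (Fin n) with generators X_1,…,X_n. Let M := [X_1,X_2,…,X_n]_L = ⁅X_1,⁅X_2,…,⁅X_{n−1},X_n⁆…⁆⁆ ∈ A. Then in A ⊗_K A: ∑_{k=1}^{n} X_k ⊗ 𝔇^L(∂^L_k(M)) = (n−1) • (X_1 ⊗ [X_2,…,X_n]_L) + ∑_{k=2}^{n−1} X_k ⊗ ⁅[X_1,…,X_{k−1}]_R, [X_{k+1},…,X_n]_L⁆ − X_n ⊗ [X_1,…,X_{n−1}]_R. -/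

import Mathlib

open scoped TensorProduct

attribute [local instance 100] LieRing.ofAssociativeRing

/-- Left-iterated Lie bracket `[Z₁, …, Z_p]_L` (equal to `Z₁` for a singleton list, `0` for
the empty list). -/
def bracketL {L : Type*} [LieRing L] : List L → L
  | [] => 0
  | [z] => z
  | z :: w :: ws => ⁅z, bracketL (w :: ws)⁆

/-- Right-iterated Lie bracket `[Z₁, …, Z_p]_R` (equal to `Z₁` for a singleton list, `0` for
the empty list). -/
def bracketR {L : Type*} [LieRing L] : List L → L
  | [] => 0
  | z :: zs => zs.foldl (fun acc u => ⁅acc, u⁆) z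

/-- The word `X_{λ₁} ⋯ X_{λ_p}` given by a list of letters. -/
def word (K : Type*) [CommRing K] {Λ : Type*} (ℓ : List Λ) : FreeAlgebra K Λ :=
  (ℓ.map (FreeAlgebra.ι K)).prod

/-- `𝔇^L`, the `K`-linear map with `𝔇^L(X_{λ₁} ⋯ X_{λ_p}) = [X_{λ₁}, …, X_{λ_p}]_L` and
`𝔇^L(1) = 0`. -/
noncomputable def DynL (K : Type*) [CommRing K] (Λ : Type*) :
    FreeAlgebra K Λ →ₗ[K] FreeAlgebra K Λ :=
  (FreeAlgebra.basisFreeMonoid K Λ).constr K fun w =>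
    bracketL (w.toList.map (FreeAlgebra.ι K))

/-- `∂^L_μ`, the `K`-linear map sending a word starting with `μ` to the word with the first
letter removed, and all other words (and `1`) to `0`. -/
noncomputable def partialL (K : Type*) [CommRing K] {Λ : Type*} [DecidableEq Λ] (μ : Λ) :
    FreeAlgebra K Λ →ₗ[K] FreeAlgebra K Λ :=
  (FreeAlgebra.basisFreeMonoid K Λ).constr K fun w =>
    if w.toList.head? = some μ then word K w.toList.tail else 0

/-!
With `ε` the augmentation, `∂_μ(X_a x) = [a = μ] x` and `∂_μ(x X_a) = ∂_μ(x) X_a + ε(x) [a = μ]`.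
Expanding `[l]_L = X_a [l']_L − [l']_L X_a` then shows, for pairwise distinct letters,
`∂_μ [l₁, μ, l₂]_L = (-1)^|l₁| ∂_μ[μ, l₂]_L · X_{rev l₁}`, where `∂_μ[μ, l₂]_L` is `[l₂]_L`
(or `1` when `l₂` is empty).

On the other side, `𝔇^L(u x) = ⁅u, 𝔇^L x⁆ + ε(x) 𝔇^L u` for every Lie polynomial `u`: the
elements satisfying this form a Lie subalgebra containing the generators. This yields
`𝔇^L [l]_L = |l| [l]_L` (Dynkin–Specht–Wever) for the first letter, `⁅[l₂]_L, 𝔇^L X_{rev l₁}⁆`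
for an inner one, and `𝔇^L X_{rev l₁}` for the last; the signs are absorbed by
`[rev l]_L = (-1)^(|l|+1) [l]_R`.
-/

open FreeAlgebra (ι algebraMapInv)

section Word

variable (K : Type*) [CommRing K] {Λ : Type*}

theorem word_cons (a : Λ) (ℓ : List Λ) : word K (a :: ℓ) = ι K a * word K ℓ := by
  simp [word]

theorem word_append (l₁ l₂ : List Λ) : word K (l₁ ++ l₂) = word K l₁ * word K l₂ := by
  simp [word]

theorem word_singleton (a : Λ) : word K [a] = ι K a := by
  simp [word]

theorem FreeAlgebra.basisFreeMonoid_apply (w : FreeMonoid Λ) :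
    FreeAlgebra.basisFreeMonoid K Λ w = word K w.toList := by
  simp only [FreeAlgebra.basisFreeMonoid, Module.Basis.map_apply, Finsupp.coe_basisSingleOne]
  erw [MonoidAlgebra.lift_single]
  simp [FreeMonoid.lift_apply, word]

theorem FreeAlgebra.linearMap_ext_word {M : Type*} [AddCommGroup M] [Module K M]
    {f g : FreeAlgebra K Λ →ₗ[K] M} (h : ∀ ℓ : List Λ, f (word K ℓ) = g (word K ℓ)) :
    f = g :=
  (FreeAlgebra.basisFreeMonoid K Λ).ext fun w => by
    simpa only [FreeAlgebra.basisFreeMonoid_apply] using h w.toList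

theorem algebraMapInv_word_of_ne_nil {ℓ : List Λ} (h : ℓ ≠ []) :
    algebraMapInv (word K ℓ) = 0 := by
  obtain ⟨a, ℓ, rfl⟩ := List.exists_cons_of_ne_nil h
  simp [word_cons, algebraMapInv]

end Word

section Bracket

variable {L : Type*} [LieRing L]

theorem bracketL_cons_of_ne_nil (z : L) {zs : List L} (h : zs ≠ []) :
    bracketL (z :: zs) = ⁅z, bracketL zs⁆ := by
  obtain ⟨w, ws, rfl⟩ := List.exists_cons_of_ne_nil h
  rfl

theorem bracketR_append_singleton {zs : List L} (h : zs ≠ []) (u : L) :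
    bracketR (zs ++ [u]) = ⁅bracketR zs, u⁆ := by
  obtain ⟨z, zs, rfl⟩ := List.exists_cons_of_ne_nil h
  simp [bracketR, List.foldl_append]

theorem bracketL_reverse (zs : List L) :
    bracketL zs.reverse = (-1 : ℤ) ^ (zs.length + 1) • bracketR zs := by
  induction zs using List.reverseRecOn with
  | nil => simp [bracketL, bracketR]
  | append_singleton zs u ih =>
    rcases eq_or_ne zs [] with rfl | hzs
    · simp [bracketL, bracketR]
    · rw [List.reverse_append, List.reverse_singleton, List.singleton_append,
        bracketL_cons_of_ne_nil u (List.reverse_ne_nil_iff.mpr hzs), ih, lie_smul,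
        bracketR_append_singleton hzs, ← lie_skew (bracketR zs) u, List.length_append,
        List.length_singleton, pow_succ _ (zs.length + 1), mul_neg_one, neg_smul, smul_neg, neg_neg]

theorem neg_one_pow_length_smul_bracketL_reverse (zs : List L) :
    (-1 : ℤ) ^ zs.length • bracketL zs.reverse = -bracketR zs := by
  rw [bracketL_reverse, smul_smul, ← pow_add, Odd.neg_one_pow ⟨zs.length, by ring⟩,
    neg_one_smul]

theorem bracketL_mem {R : Type*} [CommRing R] [LieAlgebra R L] (S : LieSubalgebra R L)
    {zs : List L} (h : ∀ z ∈ zs, z ∈ S) : bracketL zs ∈ S := by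
  induction zs with
  | nil => exact S.zero_mem
  | cons z zs ih =>
    rcases eq_or_ne zs [] with rfl | hzs
    · exact h z List.mem_cons_self
    · rw [bracketL_cons_of_ne_nil z hzs]
      exact S.lie_mem (h z List.mem_cons_self)
        (ih fun w hw => h w (List.mem_cons_of_mem z hw))

end Bracket

section Dynkin

variable (K : Type*) [CommRing K] {Λ : Type*}

-- `rw`/`simp` cannot use `lie_smul` here: its scalar action on `FreeAlgebra` comes through an
-- instance path that only agrees with the goal's after unfolding.
theorem FreeAlgebra.lie_smul (c : K) (u y : FreeAlgebra K Λ) : ⁅u, c • y⁆ = c • ⁅u, y⁆ :=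
  _root_.lie_smul c u y

theorem DynL_word (ℓ : List Λ) : DynL K Λ (word K ℓ) = bracketL (ℓ.map (ι K)) := by
  rw [← FreeMonoid.toList_ofList ℓ, ← FreeAlgebra.basisFreeMonoid_apply, DynL,
    Module.Basis.constr_basis]

theorem DynL_one : DynL K Λ 1 = 0 :=
  DynL_word K []

theorem DynL_ι (a : Λ) : DynL K Λ (ι K a) = ι K a := by
  simpa [word_singleton, bracketL] using DynL_word K [a]

theorem DynL_ι_mul (a : Λ) (x : FreeAlgebra K Λ) :
    DynL K Λ (ι K a * x) = ⁅ι K a, DynL K Λ x⁆ + algebraMapInv x • ι K a := by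
  have h : (DynL K Λ).comp (LinearMap.mulLeft K (ι K a)) =
      (LieAlgebra.ad K _ (ι K a)).comp (DynL K Λ) +
        (algebraMapInv : FreeAlgebra K Λ →ₐ[K] K).toLinearMap.smulRight (ι K a) := by
    refine FreeAlgebra.linearMap_ext_word K fun ℓ => ?_
    rcases eq_or_ne ℓ [] with rfl | hℓ
    · simp [DynL_one, DynL_ι, word]
    · simp [← word_cons, DynL_word, algebraMapInv_word_of_ne_nil K hℓ,
        bracketL_cons_of_ne_nil _ (List.map_eq_nil_iff.not.mpr hℓ)]
  simpa using LinearMap.congr_fun h x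

end Dynkin

section Leibniz

variable (K : Type*) [CommRing K] (Λ : Type*)

def dynLLeibnizSubalgebra : LieSubalgebra K (FreeAlgebra K Λ) where
  carrier := {u | algebraMapInv u = 0 ∧
    ∀ x, DynL K Λ (u * x) = ⁅u, DynL K Λ x⁆ + algebraMapInv x • DynL K Λ u}
  zero_mem' := by simp
  add_mem' := by
    rintro u v ⟨hu₀, hu⟩ ⟨hv₀, hv⟩
    refine ⟨by simp [hu₀, hv₀], fun x => ?_⟩
    simp only [add_mul, map_add, hu, hv, add_lie, smul_add]
    abel
  smul_mem' := by
    rintro c u ⟨hu₀, hu⟩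
    refine ⟨by simp [hu₀], fun x => ?_⟩
    simp only [smul_mul_assoc, map_smul, hu, smul_lie, smul_add, smul_comm c]
  lie_mem' := by
    rintro u v ⟨hu₀, hu⟩ ⟨hv₀, hv⟩
    have hD : DynL K Λ ⁅u, v⁆ = ⁅u, DynL K Λ v⁆ - ⁅v, DynL K Λ u⁆ := by
      simp [Ring.lie_def, hu, hv, hu₀, hv₀]
    refine ⟨by simp [Ring.lie_def, mul_comm, hu₀], fun x => ?_⟩
    have hx : ⁅u, v⁆ * x = u * (v * x) - v * (u * x) := by
      rw [Ring.lie_def]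
      noncomm_ring
    simp only [hx, map_sub, hu, hv, map_mul, hu₀, hv₀, zero_mul, zero_smul, add_zero, lie_add,
      FreeAlgebra.lie_smul, hD, lie_lie, smul_sub]
    abel

variable {K Λ}

theorem algebraMapInv_eq_zero_of_mem {u : FreeAlgebra K Λ} (hu : u ∈ dynLLeibnizSubalgebra K Λ) :
    algebraMapInv u = 0 :=
  hu.1

theorem DynL_mul_of_mem {u : FreeAlgebra K Λ} (hu : u ∈ dynLLeibnizSubalgebra K Λ)
    (x : FreeAlgebra K Λ) :
    DynL K Λ (u * x) = ⁅u, DynL K Λ x⁆ + algebraMapInv x • DynL K Λ u :=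
  hu.2 x

theorem ι_mem_dynLLeibnizSubalgebra (a : Λ) : ι K a ∈ dynLLeibnizSubalgebra K Λ :=
  ⟨by simp [algebraMapInv], fun x => by rw [DynL_ι_mul, DynL_ι]⟩

theorem bracketL_map_ι_mem (ℓ : List Λ) :
    bracketL (ℓ.map (ι K)) ∈ dynLLeibnizSubalgebra K Λ :=
  bracketL_mem _ fun _ hz => by
    obtain ⟨a, -, rfl⟩ := List.mem_map.mp hz
    exact ι_mem_dynLLeibnizSubalgebra a

theorem DynL_lie_of_mem {u v : FreeAlgebra K Λ} (hu : u ∈ dynLLeibnizSubalgebra K Λ)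
    (hv : v ∈ dynLLeibnizSubalgebra K Λ) :
    DynL K Λ ⁅u, v⁆ = ⁅u, DynL K Λ v⁆ - ⁅v, DynL K Λ u⁆ := by
  rw [Ring.lie_def, map_sub, DynL_mul_of_mem hu, DynL_mul_of_mem hv,
    algebraMapInv_eq_zero_of_mem hu, algebraMapInv_eq_zero_of_mem hv, zero_smul, zero_smul,
    add_zero, add_zero]

theorem DynL_bracketL_map_ι (ℓ : List Λ) :
    DynL K Λ (bracketL (ℓ.map (ι K))) = ℓ.length • bracketL (ℓ.map (ι K)) := by
  induction ℓ with
  | nil => simp [bracketL]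
  | cons a ℓ ih =>
    rcases eq_or_ne ℓ [] with rfl | hℓ
    · simp [bracketL, DynL_ι]
    rw [List.map_cons, bracketL_cons_of_ne_nil _ (List.map_eq_nil_iff.not.mpr hℓ),
      DynL_lie_of_mem (ι_mem_dynLLeibnizSubalgebra a) (bracketL_map_ι_mem ℓ), ih, DynL_ι,
      lie_nsmul, ← lie_skew _ (ι K a), sub_neg_eq_add, List.length_cons, succ_nsmul]

end Leibniz

section Partial

variable (K : Type*) [CommRing K] {Λ : Type*} [DecidableEq Λ]

theorem partialL_word (μ : Λ) (ℓ : List Λ) :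
    partialL K μ (word K ℓ) = if ℓ.head? = some μ then word K ℓ.tail else 0 := by
  rw [← FreeMonoid.toList_ofList ℓ, ← FreeAlgebra.basisFreeMonoid_apply, partialL,
    Module.Basis.constr_basis]

theorem partialL_one (μ : Λ) : partialL K μ 1 = 0 := by
  simpa [word] using partialL_word K μ []

theorem partialL_ι_mul (μ a : Λ) (x : FreeAlgebra K Λ) :
    partialL K μ (ι K a * x) = if a = μ then x else 0 := by
  have h : (partialL K μ).comp (LinearMap.mulLeft K (ι K a)) =
      if a = μ then LinearMap.id else 0 :=
    FreeAlgebra.linearMap_ext_word K fun ℓ => by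
      split_ifs with ha <;> simp [← word_cons, partialL_word, ha]
  split_ifs with ha <;> simpa [ha] using LinearMap.congr_fun h x

theorem partialL_ι (μ a : Λ) : partialL K μ (ι K a) = if a = μ then 1 else 0 := by
  simpa using partialL_ι_mul K μ a 1

theorem partialL_mul_ι (μ a : Λ) (x : FreeAlgebra K Λ) :
    partialL K μ (x * ι K a) =
      partialL K μ x * ι K a + algebraMapInv x • (if a = μ then 1 else 0) := by
  have h : (partialL K μ).comp (LinearMap.mulRight K (ι K a)) =
      (LinearMap.mulRight K (ι K a)).comp (partialL K μ) +
        (algebraMapInv : FreeAlgebra K Λ →ₐ[K] K).toLinearMap.smulRight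
          (if a = μ then 1 else 0) := by
    refine FreeAlgebra.linearMap_ext_word K fun ℓ => ?_
    rcases ℓ with _ | ⟨b, t⟩
    · simp [word, partialL_ι, partialL_one]
    · rw [LinearMap.comp_apply, LinearMap.mulRight_apply, ← word_singleton, ← word_append]
      simp [partialL_word, algebraMapInv_word_of_ne_nil, word_append, apply_ite (· * word K [a])]
  simpa using LinearMap.congr_fun h x

end Partial

section PartialBracket

variable {K : Type*} [CommRing K] {Λ : Type*} [DecidableEq Λ]

theorem partialL_bracketL_cons_of_ne {μ a : Λ} (ha : a ≠ μ) {ℓ : List Λ} (hℓ : ℓ ≠ []) :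
    partialL K μ (bracketL ((a :: ℓ).map (ι K))) =
      -(partialL K μ (bracketL (ℓ.map (ι K))) * ι K a) := by
  rw [List.map_cons, bracketL_cons_of_ne_nil _ (List.map_eq_nil_iff.not.mpr hℓ), Ring.lie_def,
    map_sub, partialL_ι_mul, partialL_mul_ι, algebraMapInv_eq_zero_of_mem (bracketL_map_ι_mem ℓ),
    if_neg ha, zero_smul, add_zero, zero_sub]

theorem partialL_bracketL_of_notMem {μ : Λ} {ℓ : List Λ} (h : μ ∉ ℓ) :
    partialL K μ (bracketL (ℓ.map (ι K))) = 0 := by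
  induction ℓ with
  | nil => exact map_zero _
  | cons a ℓ ih =>
    obtain ⟨hμa, hℓμ⟩ := not_or.mp (List.mem_cons.not.mp h)
    rcases eq_or_ne ℓ [] with rfl | hℓ
    · simp [bracketL, partialL_ι, Ne.symm hμa]
    · rw [partialL_bracketL_cons_of_ne (Ne.symm hμa) hℓ, ih hℓμ, zero_mul, neg_zero]

theorem partialL_bracketL_cons_self {μ : Λ} {ℓ : List Λ} (h : μ ∉ ℓ) (hℓ : ℓ ≠ []) :
    partialL K μ (bracketL ((μ :: ℓ).map (ι K))) = bracketL (ℓ.map (ι K)) := by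
  rw [List.map_cons, bracketL_cons_of_ne_nil _ (List.map_eq_nil_iff.not.mpr hℓ), Ring.lie_def,
    map_sub, partialL_ι_mul, partialL_mul_ι, partialL_bracketL_of_notMem h,
    algebraMapInv_eq_zero_of_mem (bracketL_map_ι_mem ℓ), if_pos rfl, if_pos rfl, zero_mul,
    zero_smul, add_zero, sub_zero]

theorem partialL_bracketL_append_cons {μ : Λ} {l₁ : List Λ} (h : μ ∉ l₁) (l₂ : List Λ) :
    partialL K μ (bracketL ((l₁ ++ μ :: l₂).map (ι K))) =
      (-1 : ℤ) ^ l₁.length •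
        (partialL K μ (bracketL ((μ :: l₂).map (ι K))) * word K l₁.reverse) := by
  induction l₁ with
  | nil => simp [word]
  | cons a l₁ ih =>
    obtain ⟨hμa, hl₁⟩ := not_or.mp (List.mem_cons.not.mp h)
    rw [List.cons_append, partialL_bracketL_cons_of_ne (Ne.symm hμa) (by simp), ih hl₁,
      List.reverse_cons, word_append, word_singleton, List.length_cons, pow_succ, mul_neg_one,
      neg_smul, smul_mul_assoc, mul_assoc]

theorem DynL_partialL_bracketL_cons_self {μ : Λ} {ℓ : List Λ} (h : μ ∉ ℓ) (hℓ : ℓ ≠ []) :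
    DynL K Λ (partialL K μ (bracketL ((μ :: ℓ).map (ι K)))) =
      ℓ.length • bracketL (ℓ.map (ι K)) := by
  rw [partialL_bracketL_cons_self h hℓ, DynL_bracketL_map_ι]

theorem DynL_partialL_bracketL_append_cons {μ : Λ} {l₁ l₂ : List Λ} (h₁ : μ ∉ l₁) (h₂ : μ ∉ l₂)
    (hl₁ : l₁ ≠ []) (hl₂ : l₂ ≠ []) :
    DynL K Λ (partialL K μ (bracketL ((l₁ ++ μ :: l₂).map (ι K)))) =
      ⁅bracketR (l₁.map (ι K)), bracketL (l₂.map (ι K))⁆ := by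
  rw [partialL_bracketL_append_cons h₁, partialL_bracketL_cons_self h₂ hl₂, map_zsmul,
    DynL_mul_of_mem (bracketL_map_ι_mem l₂),
    algebraMapInv_word_of_ne_nil K (List.reverse_ne_nil_iff.mpr hl₁), zero_smul, add_zero,
    DynL_word, ← lie_zsmul, List.map_reverse, ← List.length_map (f := ι K),
    neg_one_pow_length_smul_bracketL_reverse, lie_neg, lie_skew]

theorem DynL_partialL_bracketL_append_singleton {μ : Λ} {ℓ : List Λ} (h : μ ∉ ℓ) :
    DynL K Λ (partialL K μ (bracketL ((ℓ ++ [μ]).map (ι K)))) = -bracketR (ℓ.map (ι K)) := by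
  rw [partialL_bracketL_append_cons h, List.map_singleton, bracketL, partialL_ι, if_pos rfl,
    one_mul, map_zsmul, DynL_word, List.map_reverse, ← List.length_map (f := ι K),
    neg_one_pow_length_smul_bracketL_reverse]

end PartialBracket

theorem Fin.sum_univ_eq_first_add_sum_middle_add_last {M : Type*} [AddCommMonoid M] {n : ℕ}
    (hn : 2 ≤ n) (f : Fin n → M) :
    ∑ k, f k = f ⟨0, Nat.zero_lt_of_lt hn⟩ +
      ∑ k ∈ Finset.univ.filter (fun k : Fin n => 1 ≤ (k : ℕ) ∧ (k : ℕ) < n - 1), f k +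
        f ⟨n - 1, Nat.sub_one_lt_of_lt hn⟩ := by
  have hends : Finset.univ.filter (fun k : Fin n => ¬(1 ≤ (k : ℕ) ∧ (k : ℕ) < n - 1)) =
      {⟨0, Nat.zero_lt_of_lt hn⟩, ⟨n - 1, Nat.sub_one_lt_of_lt hn⟩} := by
    ext k
    simp only [Finset.mem_filter, Finset.mem_univ, true_and, Finset.mem_insert,
      Finset.mem_singleton, Fin.ext_iff]
    omega
  rw [← Finset.sum_filter_add_sum_filter_not _ (fun k : Fin n => 1 ≤ (k : ℕ) ∧ (k : ℕ) < n - 1),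
    hends, Finset.sum_pair (by simp [Fin.ext_iff]; omega)]
  abel

theorem List.finRange_eq_take_append_cons_drop {n : ℕ} (k : Fin n) :
    List.finRange n = (List.finRange n).take k ++ k :: (List.finRange n).drop (k + 1) := by
  conv_lhs => rw [← List.take_append_drop k (List.finRange n),
    List.drop_eq_getElem_cons (by simp), List.getElem_finRange]
  rfl

theorem List.Nodup.notMem_of_eq_append_cons {α : Type*} {l l₁ l₂ : List α} {a : α}
    (hl : l.Nodup) (h : l = l₁ ++ a :: l₂) : a ∉ l₁ ∧ a ∉ l₂ := by
  simpa using List.nodup_cons.mp (List.nodup_middle.mp (h ▸ hl)) |>.1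

/-- (Burgunder splitting of a left-nested Lie monomial.)  For
`M = ⁅X₁, ⁅X₂, …, ⁅X_{n-1}, X_n⁆…⁆⁆` in `A = FreeAlgebra K (Fin n)` one has, in `A ⊗[K] A`,
`∑ₖ Xₖ ⊗ 𝔇^L(∂^L_k M) = (n-1) • (X₁ ⊗ [X₂,…,Xₙ]_L)
  + ∑_{k=2}^{n-1} Xₖ ⊗ ⁅[X₁,…,X_{k-1}]_R, [X_{k+1},…,Xₙ]_L⁆ − Xₙ ⊗ [X₁,…,X_{n-1}]_R`. -/
theorem burgunder_splitting_left_nested (K : Type*) [CommRing K]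
    (n : ℕ) (hn : 2 ≤ n) :
    (∑ k : Fin n,
        FreeAlgebra.ι K k ⊗ₜ[K]
          DynL K (Fin n) (partialL K k
            (bracketL (List.ofFn fun i : Fin n => FreeAlgebra.ι K i)))) =
      (n - 1) •
          (FreeAlgebra.ι K (⟨0, by omega⟩ : Fin n) ⊗ₜ[K]
            bracketL ((List.ofFn fun i : Fin n => FreeAlgebra.ι K i).drop 1)) +
        (∑ k ∈ Finset.univ.filter fun k : Fin n => 1 ≤ (k : ℕ) ∧ (k : ℕ) < n - 1,
          FreeAlgebra.ι K k ⊗ₜ[K]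
            ⁅bracketR ((List.ofFn fun i : Fin n => FreeAlgebra.ι K i).take (k : ℕ)),
              bracketL ((List.ofFn fun i : Fin n => FreeAlgebra.ι K i).drop ((k : ℕ) + 1))⁆) -
        FreeAlgebra.ι K (⟨n - 1, by omega⟩ : Fin n) ⊗ₜ[K]
          bracketR ((List.ofFn fun i : Fin n => FreeAlgebra.ι K i).take (n - 1)) := by
  rw [Fin.sum_univ_eq_first_add_sum_middle_add_last hn, List.ofFn_eq_map]
  set X := List.finRange n
  have hsplit (k : Fin n) : X = X.take k ++ k :: X.drop (k + 1) :=
    List.finRange_eq_take_append_cons_drop k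
  have hnotMem (k : Fin n) : k ∉ X.take k ∧ k ∉ X.drop (k + 1) :=
    (List.nodup_finRange n).notMem_of_eq_append_cons (hsplit k)
  have hfirst : DynL K (Fin n) (partialL K ⟨0, by omega⟩ (bracketL (X.map (ι K)))) =
      (n - 1) • bracketL ((X.map (ι K)).drop 1) := by
    conv_lhs => rw [hsplit ⟨0, by omega⟩, List.take_zero, List.nil_append]
    rw [DynL_partialL_bracketL_cons_self (hnotMem _).2
      (List.ne_nil_of_length_pos (by simp [X]; omega)), List.map_drop]
    simp [X]
  have hmiddle : ∀ k ∈ Finset.univ.filter fun k : Fin n => 1 ≤ (k : ℕ) ∧ (k : ℕ) < n - 1,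
      DynL K (Fin n) (partialL K k (bracketL (X.map (ι K)))) =
        ⁅bracketR ((X.map (ι K)).take k), bracketL ((X.map (ι K)).drop (k + 1))⁆ := by
    intro k hk
    rw [Finset.mem_filter] at hk
    conv_lhs => rw [hsplit k]
    rw [DynL_partialL_bracketL_append_cons (hnotMem k).1 (hnotMem k).2
      (List.ne_nil_of_length_pos (by simp [X]; omega))
      (List.ne_nil_of_length_pos (by simp [X]; omega)), List.map_take, List.map_drop]
  have hlast : DynL K (Fin n) (partialL K ⟨n - 1, by omega⟩ (bracketL (X.map (ι K)))) =
      -bracketR ((X.map (ι K)).take (n - 1)) := by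
    conv_lhs => rw [hsplit ⟨n - 1, by omega⟩, List.drop_eq_nil_of_le (by simp [X]; omega)]
    rw [DynL_partialL_bracketL_append_singleton (hnotMem _).1, List.map_take]
  rw [hfirst, Finset.sum_congr rfl fun k hk => by rw [hmiddle k hk], hlast,
    TensorProduct.tmul_smul, TensorProduct.tmul_neg, sub_eq_add_neg]
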